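/- Intermediate social-cost bound: for every instance of 5 agents on the unit circle, PCD = ∑ i, P i · C i ≤ 1 − ∑ i, (P i)² + 2 · ∑ i, P i · P (i + 2), where indices are taken mod 5. -/

import Mathlib

open Finset

/-- Position of agent `i` on the unit circle: the image of the partial sum
`∑_{j < i} d j`, so that `d i` is the clockwise arc from agent `i` to agent `i+1`. -/
noncomputable def pos (d : Fin 5 → ℝ) (i : Fin 5) : AddCircle (1 : ℝ) :=
  ((∑ j ∈ Finset.Iio i, d j : ℝ) : AddCircle (1 : ℝ))

/-- Social cost of placing the facility at `a`. -/
noncomputable def SC (d : Fin 5 → ℝ) (a : AddCircle (1 : ℝ)) : ℝ :=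
  ∑ i : Fin 5, dist (pos d i) a

/-- Social cost of placing the facility at agent `i`'s location. -/
noncomputable def C (d : Fin 5 → ℝ) (i : Fin 5) : ℝ := SC d (pos d i)

/-- The optimal social cost. -/
noncomputable def OPT (d : Fin 5 → ℝ) : ℝ := ⨅ a : AddCircle (1 : ℝ), SC d a

/-- The length of the arc facing agent `i` (indices mod 5). -/
noncomputable def P (d : Fin 5 → ℝ) (i : Fin 5) : ℝ := d (i + 2)

/-- Expected social cost of the PCD mechanism. -/
noncomputable def PCD (d : Fin 5 → ℝ) : ℝ := ∑ i : Fin 5, P d i * C d i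

lemma dist_coe_le' (x y : ℝ) :
    dist ((x:ℝ) : AddCircle (1:ℝ)) ((y:ℝ) : AddCircle (1:ℝ)) ≤ |x - y| := by
  rw [dist_eq_norm, ← AddCircle.coe_sub]
  simpa using QuotientAddGroup.norm_mk_le_norm (S := AddSubgroup.zmultiples (1:ℝ)) (m := x - y)

lemma pos0 (d : Fin 5 → ℝ) : pos d 0 = ((0:ℝ) : AddCircle (1:ℝ)) := by
  unfold pos; congr 1

lemma pos0' (d : Fin 5 → ℝ) : pos d 0 = ((1:ℝ) : AddCircle (1:ℝ)) := by
  rw [pos0]; simpa using (AddCircle.coe_add_period (1:ℝ) 0).symm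

lemma pos1 (d : Fin 5 → ℝ) : pos d 1 = ((d 0 : ℝ) : AddCircle (1:ℝ)) := by
  unfold pos; congr 1
  show ∑ j ∈ ({0} : Finset (Fin 5)), d j = _
  simp

lemma pos1' (d : Fin 5 → ℝ) : pos d 1 = ((d 0 + 1 : ℝ) : AddCircle (1:ℝ)) := by
  rw [pos1]; exact (AddCircle.coe_add_period (1:ℝ) (d 0)).symm

lemma pos2 (d : Fin 5 → ℝ) : pos d 2 = ((d 0 + d 1 : ℝ) : AddCircle (1:ℝ)) := by
  unfold pos; congr 1
  show ∑ j ∈ ({0,1} : Finset (Fin 5)), d j = _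
  simp [Finset.sum_insert]

lemma pos3 (d : Fin 5 → ℝ) : pos d 3 = ((d 0 + d 1 + d 2 : ℝ) : AddCircle (1:ℝ)) := by
  unfold pos; congr 1
  show ∑ j ∈ ({0,1,2} : Finset (Fin 5)), d j = _
  simp [Finset.sum_insert]; ring

lemma pos4 (d : Fin 5 → ℝ) :
    pos d 4 = ((d 0 + d 1 + d 2 + d 3 : ℝ) : AddCircle (1:ℝ)) := by
  unfold pos; congr 1
  show ∑ j ∈ ({0,1,2,3} : Finset (Fin 5)), d j = _
  simp [Finset.sum_insert]; ring

lemma key (d : Fin 5 → ℝ) (hd : ∀ i, 0 ≤ d i) (hsum : ∑ i, d i = 1) :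
    ∀ i, C d i ≤ 1 - d (i + 2) + d i + d (i + 4) := by
  have hs : d 0 + d 1 + d 2 + d 3 + d 4 = 1 := by
    rw [← hsum, Fin.sum_univ_five]
  have h0 := hd 0; have h1 := hd 1; have h2 := hd 2; have h3 := hd 3; have h4 := hd 4
  intro i
  fin_cases i
  · show C d 0 ≤ 1 - d 2 + d 0 + d 4
    rw [C, SC, Fin.sum_univ_five]
    have b0 : dist (pos d 0) (pos d 0) = 0 := dist_self _
    have b1 : dist (pos d 1) (pos d 0) ≤ |d 0 - 0| := by
      rw [pos1 d, pos0 d]; exact dist_coe_le' _ _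
    have b2 : dist (pos d 2) (pos d 0) ≤ |(d 0 + d 1) - 0| := by
      rw [pos2 d, pos0 d]; exact dist_coe_le' _ _
    have b3 : dist (pos d 3) (pos d 0) ≤ |(d 0 + d 1 + d 2) - 1| := by
      rw [pos3 d, pos0' d]; exact dist_coe_le' _ _
    have b4 : dist (pos d 4) (pos d 0) ≤ |(d 0 + d 1 + d 2 + d 3) - 1| := by
      rw [pos4 d, pos0' d]; exact dist_coe_le' _ _
    rw [abs_of_nonneg (by linarith)] at b1
    rw [abs_of_nonneg (by linarith)] at b2
    rw [abs_of_nonpos (by linarith)] at b3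
    rw [abs_of_nonpos (by linarith)] at b4
    linarith
  · show C d 1 ≤ 1 - d 3 + d 1 + d 0
    rw [C, SC, Fin.sum_univ_five]
    have b0 : dist (pos d 0) (pos d 1) ≤ |0 - d 0| := by
      rw [pos1 d, pos0 d]; exact dist_coe_le' _ _
    have b1 : dist (pos d 1) (pos d 1) = 0 := dist_self _
    have b2 : dist (pos d 2) (pos d 1) ≤ |(d 0 + d 1) - d 0| := by
      rw [pos2 d, pos1 d]; exact dist_coe_le' _ _
    have b3 : dist (pos d 3) (pos d 1) ≤ |(d 0 + d 1 + d 2) - d 0| := by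
      rw [pos3 d, pos1 d]; exact dist_coe_le' _ _
    have b4 : dist (pos d 4) (pos d 1) ≤ |(d 0 + d 1 + d 2 + d 3) - (d 0 + 1)| := by
      rw [pos4 d, pos1' d]; exact dist_coe_le' _ _
    rw [abs_of_nonpos (by linarith)] at b0
    rw [abs_of_nonneg (by linarith)] at b2
    rw [abs_of_nonneg (by linarith)] at b3
    rw [abs_of_nonpos (by linarith)] at b4
    linarith
  · show C d 2 ≤ 1 - d 4 + d 2 + d 1
    rw [C, SC, Fin.sum_univ_five]
    have b0 : dist (pos d 0) (pos d 2) ≤ |0 - (d 0 + d 1)| := by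
      rw [pos2 d, pos0 d]; exact dist_coe_le' _ _
    have b1 : dist (pos d 1) (pos d 2) ≤ |d 0 - (d 0 + d 1)| := by
      rw [pos2 d, pos1 d]; exact dist_coe_le' _ _
    have b2 : dist (pos d 2) (pos d 2) = 0 := dist_self _
    have b3 : dist (pos d 3) (pos d 2) ≤ |(d 0 + d 1 + d 2) - (d 0 + d 1)| := by
      rw [pos3 d, pos2 d]; exact dist_coe_le' _ _
    have b4 : dist (pos d 4) (pos d 2) ≤ |(d 0 + d 1 + d 2 + d 3) - (d 0 + d 1)| := by
      rw [pos4 d, pos2 d]; exact dist_coe_le' _ _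
    rw [abs_of_nonpos (by linarith)] at b0
    rw [abs_of_nonpos (by linarith)] at b1
    rw [abs_of_nonneg (by linarith)] at b3
    rw [abs_of_nonneg (by linarith)] at b4
    linarith
  · show C d 3 ≤ 1 - d 0 + d 3 + d 2
    rw [C, SC, Fin.sum_univ_five]
    have b0 : dist (pos d 0) (pos d 3) ≤ |1 - (d 0 + d 1 + d 2)| := by
      rw [pos3 d, pos0' d]; exact dist_coe_le' _ _
    have b1 : dist (pos d 1) (pos d 3) ≤ |d 0 - (d 0 + d 1 + d 2)| := by
      rw [pos3 d, pos1 d]; exact dist_coe_le' _ _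
    have b2 : dist (pos d 2) (pos d 3) ≤ |(d 0 + d 1) - (d 0 + d 1 + d 2)| := by
      rw [pos3 d, pos2 d]; exact dist_coe_le' _ _
    have b3 : dist (pos d 3) (pos d 3) = 0 := dist_self _
    have b4 : dist (pos d 4) (pos d 3) ≤ |(d 0 + d 1 + d 2 + d 3) - (d 0 + d 1 + d 2)| := by
      rw [pos4 d, pos3 d]; exact dist_coe_le' _ _
    rw [abs_of_nonneg (by linarith)] at b0
    rw [abs_of_nonpos (by linarith)] at b1
    rw [abs_of_nonpos (by linarith)] at b2
    rw [abs_of_nonneg (by linarith)] at b4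
    linarith
  · show C d 4 ≤ 1 - d 1 + d 4 + d 3
    rw [C, SC, Fin.sum_univ_five]
    have b0 : dist (pos d 0) (pos d 4) ≤ |1 - (d 0 + d 1 + d 2 + d 3)| := by
      rw [pos4 d, pos0' d]; exact dist_coe_le' _ _
    have b1 : dist (pos d 1) (pos d 4) ≤ |(d 0 + 1) - (d 0 + d 1 + d 2 + d 3)| := by
      rw [pos4 d, pos1' d]; exact dist_coe_le' _ _
    have b2 : dist (pos d 2) (pos d 4) ≤ |(d 0 + d 1) - (d 0 + d 1 + d 2 + d 3)| := by
      rw [pos4 d, pos2 d]; exact dist_coe_le' _ _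
    have b3 : dist (pos d 3) (pos d 4) ≤ |(d 0 + d 1 + d 2) - (d 0 + d 1 + d 2 + d 3)| := by
      rw [pos4 d, pos3 d]; exact dist_coe_le' _ _
    have b4 : dist (pos d 4) (pos d 4) = 0 := dist_self _
    rw [abs_of_nonneg (by linarith)] at b0
    rw [abs_of_nonneg (by linarith)] at b1
    rw [abs_of_nonpos (by linarith)] at b2
    rw [abs_of_nonpos (by linarith)] at b3
    linarith

theorem pcd_quadratic_bound (d : Fin 5 → ℝ) (hd : ∀ i, 0 ≤ d i)
    (hsum : ∑ i, d i = 1) :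
    PCD d ≤ 1 - ∑ i, (P d i) ^ 2 + 2 * ∑ i, P d i * P d (i + 2) := by
  have hk := key d hd hsum
  have hs : d 0 + d 1 + d 2 + d 3 + d 4 = 1 := by
    rw [← hsum, Fin.sum_univ_five]
  have step : PCD d ≤ ∑ i : Fin 5, P d i * (1 - d (i + 2) + d i + d (i + 4)) := by
    rw [PCD]
    apply Finset.sum_le_sum
    intro i _
    exact mul_le_mul_of_nonneg_left (hk i) (hd (i + 2))
  refine step.trans ?_
  have expand : ∀ (f : Fin 5 → ℝ), ∑ i : Fin 5, f i = f 0 + f 1 + f 2 + f 3 + f 4 :=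
    fun f => Fin.sum_univ_five f
  rw [expand, expand, expand]
  simp only [P, show ((0:Fin 5)+2) = 2 from rfl, show ((1:Fin 5)+2) = 3 from rfl,
    show ((2:Fin 5)+2) = 4 from rfl, show ((3:Fin 5)+2) = 0 from rfl,
    show ((4:Fin 5)+2) = 1 from rfl, show ((0:Fin 5)+4) = 4 from rfl,
    show ((1:Fin 5)+4) = 0 from rfl, show ((2:Fin 5)+4) = 1 from rfl,
    show ((3:Fin 5)+4) = 2 from rfl, show ((4:Fin 5)+4) = 3 from rfl]
  nlinarith [hs]
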